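/- Let H be a real Hilbert space, T > 0, ρ ∈ (0,∞], and let C : [0,T] ⇉ H be a set-valued map such that: (H₁) for all t ∈ [0,T], C(t) is nonempty, closed, connected, and ρ-uniformly prox-regular; (H₂) C is lower semicontinuous on [0,T]; and there exists r > 0 with C(t) ⊆ B̄_r[0] for all t ∈ [0,T]. Then C satisfies the bounded selection-extension property (H₃): for every bounded map x : [0,T] → H with x(t) ∈ C(t) for all t and every η > 0, there exists R > 0 such that for every compact K ⊆ [0,T] and every continuous y : K → H with y(t) ∈ C(t) for all t ∈ K and sup_{t∈K}‖y(t) − x(t)‖ ≤ η, there is a continuous ȳ : [0,T] → H with ȳ(t) ∈ C(t) for all t ∈ [0,T], ȳ = y on K, and sup_{t∈[0,T]}‖ȳ(t)‖ ≤ R. -/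

import Mathlib

open MeasureTheory Set Metric Filter Topology
open scoped RealInnerProductSpace ENNReal

/-- The proximal normal cone of `S` at `x`: `ζ ∈ N^P(S;x)` iff there are `σ ≥ 0`, `η > 0`
with `⟪ζ, y - x⟫ ≤ σ‖y - x‖²` for all `y ∈ S` with `‖y - x‖ < η`. -/
def ProxNormalCone {H : Type*} [NormedAddCommGroup H] [InnerProductSpace ℝ H]
    (S : Set H) (x : H) : Set H :=
  {ζ : H | ∃ σ : ℝ, 0 ≤ σ ∧ ∃ η : ℝ, 0 < η ∧
    ∀ y ∈ S, ‖y - x‖ < η → ⟪ζ, y - x⟫ ≤ σ * ‖y - x‖ ^ 2}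

/-- `ρ`-uniform prox-regularity, with `ρ ∈ (0,∞]` encoded in `ℝ≥0∞`.
For `ρ = ∞` one has `‖ζ‖ / (2 * ρ.toReal) = ‖ζ‖ / 0 = 0`, recovering the convex inequality. -/
def UniformlyProxRegular {H : Type*} [NormedAddCommGroup H] [InnerProductSpace ℝ H]
    (ρ : ℝ≥0∞) (S : Set H) : Prop :=
  ∀ x ∈ S, ∀ ζ ∈ ProxNormalCone S x, ∀ x' ∈ S,
    ⟪ζ, x' - x⟫ ≤ ‖ζ‖ / (2 * ρ.toReal) * ‖x' - x‖ ^ 2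

/-- Lower semicontinuity of a set-valued map on a set `A`: for every `a ∈ A` and open `U`
meeting `C a`, the set of points of `A` where `C` meets `U` is a neighborhood of `a` in `A`. -/
def LscOn {α β : Type*} [TopologicalSpace α] [TopologicalSpace β]
    (C : α → Set β) (A : Set α) : Prop :=
  ∀ a ∈ A, ∀ U : Set β, IsOpen U → (C a ∩ U).Nonempty →
    {a' | a' ∈ A ∧ (C a' ∩ U).Nonempty} ∈ nhdsWithin a A

/-- Admissible trajectory for a moving set `C` on `[0,T]`: right-continuous, of bounded
variation, with `x 0 ∈ C 0` and `x t ∈ C t` for all `t ∈ [0,T]`. -/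
def AdmissibleTrajectory {E : Type*} [NormedAddCommGroup E]
    (C : ℝ → Set E) (T : ℝ) (x : ℝ → E) : Prop :=
  (∀ t ∈ Icc (0:ℝ) T, ContinuousWithinAt x (Ici t) t) ∧
    BoundedVariationOn x (Icc (0:ℝ) T) ∧ x 0 ∈ C 0 ∧ ∀ t ∈ Icc (0:ℝ) T, x t ∈ C t

/-- The differential measure `dx` is absolutely continuous w.r.t. `ν` with density
`v ∈ L¹_ν`: `x t = x 0 + ∫_{(0,t]} v dν` for all `t ∈ [0,T]`. -/
def HasDensity {E : Type*} [NormedAddCommGroup E] [NormedSpace ℝ E]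
    (T : ℝ) (ν : Measure ℝ) (x v : ℝ → E) : Prop :=
  Integrable v ν ∧ ∀ t ∈ Icc (0:ℝ) T, x t = x 0 + ∫ s in Ioc (0:ℝ) t, v s ∂ν

/-- A (complete) positive Radon measure on `[0,T]`: a finite inner regular Borel measure
carried by `[0,T]`. -/
def IsRadonOn (ν : Measure ℝ) (T : ℝ) : Prop :=
  IsFiniteMeasure ν ∧ ν.InnerRegular ∧ ν ((Icc (0:ℝ) T)ᶜ) = 0

/-- The bounded selection-extension property (H₃). -/
def SelectionExtension {E : Type*} [NormedAddCommGroup E] (C : ℝ → Set E) (T : ℝ) : Prop :=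
  ∀ x : ℝ → E, (∃ M : ℝ, ∀ t ∈ Icc (0:ℝ) T, ‖x t‖ ≤ M) →
    (∀ t ∈ Icc (0:ℝ) T, x t ∈ C t) → ∀ η : ℝ, 0 < η →
    ∃ R : ℝ, 0 < R ∧
      ∀ K : Set ℝ, IsCompact K → K ⊆ Icc (0:ℝ) T →
        ∀ y : ℝ → E, ContinuousOn y K → (∀ t ∈ K, y t ∈ C t) →
          (∀ t ∈ K, ‖y t - x t‖ ≤ η) →
          ∃ ybar : ℝ → E, ContinuousOn ybar (Icc (0:ℝ) T) ∧
            (∀ t ∈ Icc (0:ℝ) T, ybar t ∈ C t) ∧ (∀ t ∈ K, ybar t = y t) ∧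
            ∀ t ∈ Icc (0:ℝ) T, ‖ybar t‖ ≤ R

/-- Hypothesis (H₁): each `C t` is nonempty, closed, connected and `ρ`-uniformly prox-regular. -/
def HypH1 {H : Type*} [NormedAddCommGroup H] [InnerProductSpace ℝ H]
    (ρ : ℝ≥0∞) (C : ℝ → Set H) (T : ℝ) : Prop :=
  ∀ t ∈ Icc (0:ℝ) T, (C t).Nonempty ∧ IsClosed (C t) ∧ IsConnected (C t) ∧
    UniformlyProxRegular ρ (C t)

/-!
Replacing `C t` by `{y t}` for `t ∈ K` preserves (H₁) and lower semicontinuity, so it suffices to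
find a continuous selection of a lower semicontinuous map `D` with closed, connected, uniformly
prox-regular values on `[0, T]`; the bound `R = r` is then automatic.

The selection is the uniform limit of continuous maps `f n` with
`infDist (f n t) (D t) < δ₀ / 2 ^ n`. The first one comes from a continuous induction along
`[0, T]`, travelling inside the connected sets `D t` by short steps. Each refinement glues, by a
partition of unity, points of `D` near `f n`: in a `ρ`-uniformly prox-regular set, a convex
combination of points at mutual distance `O(δ)` lies within `O(δ² / ρ)` of the set. This is seen
by testing against the proximal normal at a nearest point; points having a nearest point in a
closed subset of a Hilbert space are dense, because moving a point towards an almost-nearest point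
squeezes the almost-nearest points of the new position into a small lens, so that a suitable
sequence of such moves converges.
-/

lemma exists_seq_of_forall_exists_succ {α : Type*} {P : ℕ → α → Prop} {R : ℕ → α → α → Prop}
    (h₀ : ∃ a, P 0 a) (h : ∀ n a, P n a → ∃ b, P (n + 1) b ∧ R n a b) :
    ∃ x : ℕ → α, ∀ n, P n (x n) ∧ R n (x n) (x (n + 1)) := by
  obtain ⟨a₀, ha₀⟩ := h₀
  have : Nonempty α := ⟨a₀⟩
  choose! next hnext using h
  let x : ℕ → α := fun n => Nat.rec a₀ (fun n a => next n a) n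
  have hx : ∀ n, P n (x n) := fun n => by
    induction n with
    | zero => exact ha₀
    | succ n ih => exact (hnext n (x n) ih).1
  exact ⟨x, fun n => ⟨hx n, (hnext n (x n) (hx n)).2⟩⟩

lemma exists_tendstoUniformlyOn_of_dist_le_geometric_two {α E : Type*} [PseudoMetricSpace E]
    [Nonempty E] [CompleteSpace E] {F : ℕ → α → E} {s : Set α} {C : ℝ}
    (hF : ∀ n, ∀ x ∈ s, dist (F n x) (F (n + 1) x) ≤ C / 2 / 2 ^ n) :
    ∃ g : α → E, TendstoUniformlyOn F g atTop s := by
  have hlim : ∀ x ∈ s, Tendsto (F · x) atTop (𝓝 (limUnder atTop (F · x))) := fun x hx =>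
    (cauchySeq_of_le_geometric_two (fun n => hF n x hx)).tendsto_limUnder
  have hC : Tendsto (fun n : ℕ => C / 2 ^ n) atTop (𝓝 0) :=
    tendsto_const_nhds.div_atTop (tendsto_pow_atTop_atTop_of_one_lt one_lt_two)
  refine ⟨fun x => limUnder atTop (F · x), Metric.tendstoUniformlyOn_iff.2 fun ε hε => ?_⟩
  filter_upwards [hC.eventually (gt_mem_nhds hε)] with n hn x hx
  rw [dist_comm]
  exact (dist_le_of_le_geometric_two_of_tendsto (fun n => hF n x hx) (hlim x hx) n).trans_lt hn

lemma IsClosed.isMinOn_dist_of_tendsto {E : Type*} [PseudoMetricSpace E] {S : Set E}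
    (hS : IsClosed S) {u q : ℕ → E} {δ : ℕ → ℝ} {v p : E} (hu : Tendsto u atTop (𝓝 v))
    (hq : Tendsto q atTop (𝓝 p)) (hδ : Tendsto δ atTop (𝓝 0)) (hqS : ∀ n, q n ∈ S)
    (huq : ∀ n, dist (u n) (q n) ≤ infDist (u n) S + δ n) : p ∈ S ∧ IsMinOn (dist v) S p := by
  refine ⟨hS.mem_of_tendsto hq (Eventually.of_forall hqS), fun y hy => ?_⟩
  refine le_of_tendsto_of_tendsto' (hu.dist hq)
    (by simpa using (hu.dist (tendsto_const_nhds (x := y))).add hδ) fun n => ?_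
  exact (huq n).trans (by gcongr; exact infDist_le_dist_of_mem hy)

lemma LscOn.eventually_infDist_lt {α E : Type*} [TopologicalSpace α] [PseudoMetricSpace E]
    {D : α → Set E} {A : Set α} (hD : LscOn D A) {b : α} (hb : b ∈ A) {c : E} (hc : c ∈ D b)
    {σ : ℝ} (hσ : 0 < σ) : ∀ᶠ t in 𝓝[A] b, infDist c (D t) < σ := by
  filter_upwards [hD b hb (ball c σ) isOpen_ball ⟨c, hc, mem_ball_self hσ⟩]
    with t ⟨_, w, hw, hwc⟩
  exact (infDist_le_dist_of_mem hw).trans_lt (mem_ball'.1 hwc)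

lemma LscOn.piecewise_singleton {α E : Type*} [TopologicalSpace α] [TopologicalSpace E]
    {C : α → Set E} {A K : Set α} [DecidablePred (· ∈ K)] {y : α → E} (hC : LscOn C A)
    (hK : IsClosed K) (hy : ContinuousOn y K) (hyC : ∀ t ∈ K, y t ∈ C t) :
    LscOn (K.piecewise (fun t => {y t}) C) A := by
  intro a ha U hU ⟨v, hv, hvU⟩
  by_cases haK : a ∈ K
  · rw [piecewise_eq_of_mem _ _ _ haK, mem_singleton_iff] at hv
    subst hv
    have hyU := eventually_nhdsWithin_iff.1 (hy a haK (hU.mem_nhds hvU))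
    filter_upwards [hC a ha U hU ⟨y a, hyC a haK, hvU⟩, nhdsWithin_le_nhds hyU]
      with t ⟨htA, hCt⟩ hyt
    refine ⟨htA, ?_⟩
    by_cases htK : t ∈ K
    · rw [piecewise_eq_of_mem _ _ _ htK]
      exact ⟨y t, rfl, hyt htK⟩
    · rwa [piecewise_eq_of_notMem _ _ _ htK]
  · rw [piecewise_eq_of_notMem _ _ _ haK] at hv
    filter_upwards [hC a ha U hU ⟨v, hv, hvU⟩, nhdsWithin_le_nhds (hK.isOpen_compl.mem_nhds haK)]
      with t ⟨htA, hCt⟩ htK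
    exact ⟨htA, by rwa [piecewise_eq_of_notMem _ _ _ htK]⟩

section NearestPoints

variable {H : Type*} [NormedAddCommGroup H] [InnerProductSpace ℝ H] {S : Set H}

lemma norm_sub_smul_sq_le {b w : H} {s d L : ℝ} (hw : ‖w‖ = 1) (hs : 0 < s) (hsd : s ≤ d)
    (hb : d ≤ ‖b‖) (hbL : ‖b - s • w‖ ≤ L) :
    ‖b - d • w‖ ^ 2 ≤ d / s * (L ^ 2 - (d - s) ^ 2) := by
  have expand : ∀ c : ℝ, ‖b - c • w‖ ^ 2 = ‖b‖ ^ 2 - 2 * c * ⟪b, w⟫ + c ^ 2 := fun c => by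
    rw [norm_sub_sq_real, real_inner_smul_right, norm_smul, hw, Real.norm_eq_abs, mul_one,
      sq_abs]
    ring
  have hsL := pow_le_pow_left₀ (norm_nonneg _) hbL 2
  have hdb := pow_le_pow_left₀ (hs.le.trans hsd) hb 2
  rw [expand] at hsL ⊢
  rw [div_mul_eq_mul_div, le_div_iff₀ hs]
  nlinarith [mul_le_mul_of_nonneg_left hdb (sub_nonneg.2 hsd)]

lemma dist_le_of_dist_add_smul_le {u w z : H} {s d θ : ℝ} (hw : ‖w‖ = 1) (hs : 0 < s)
    (hsd : s ≤ d) (hθ₀ : 0 ≤ θ) (hθ₁ : θ ≤ 1) (hzu : d ≤ dist z u)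
    (hz : dist (u + s • w) z ≤ d - s + 2 * (s * θ ^ 2)) : dist z (u + d • w) ≤ 2 * d * θ := by
  have key := norm_sub_smul_sq_le (b := z - u) (L := d - s + 2 * (s * θ ^ 2)) hw hs hsd
    (by rw [← dist_eq_norm]; exact hzu) (by rw [sub_sub, ← dist_eq_norm, dist_comm]; exact hz)
  have hd : 0 < d := hs.trans_le hsd
  have hθs : s * θ ^ 2 ≤ s := mul_le_of_le_one_right hs.le (pow_le_one₀ hθ₀ hθ₁)
  rw [dist_eq_norm, sub_add_eq_sub_sub_swap, sub_right_comm]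
  refine pow_le_pow_iff_left₀ (norm_nonneg _) (by positivity) two_ne_zero |>.1 <| key.trans ?_
  rw [div_mul_eq_mul_div, div_le_iff₀ hs]
  nlinarith [mul_le_mul_of_nonneg_left hθs (by positivity : 0 ≤ 4 * d * θ ^ 2)]

/-- Moving from `u` a distance `s` towards an almost-nearest point `q` squeezes the almost-nearest
points of the new centre into a ball of radius `2 d θ` around `u + d • w`, where `w` is the unit
vector from `u` to `q`. -/
lemma exists_dist_eq_forall_dist_le {u q : H} {s θ : ℝ} (hq : q ∈ S)
    (hqu : dist u q ≤ infDist u S + s * θ ^ 2) (hs : 0 < s) (hsd : s ≤ infDist u S)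
    (hθ₀ : 0 ≤ θ) (hθ₁ : θ ≤ 1) :
    ∃ u', dist u' u = s ∧ ∀ z ∈ S, dist u' z ≤ infDist u' S + s * θ ^ 2 →
      dist z q ≤ 4 * infDist u S * θ := by
  set d := infDist u S
  have hn : d ≤ ‖q - u‖ := by rw [← dist_eq_norm, dist_comm]; exact infDist_le_dist_of_mem hq
  have hn₀ : 0 < ‖q - u‖ := hs.trans_le (hsd.trans hn)
  set w := ‖q - u‖⁻¹ • (q - u)
  have hw : ‖w‖ = 1 := by rw [norm_smul, norm_inv, norm_norm, inv_mul_cancel₀ hn₀.ne']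
  have hu'u : dist (u + s • w) u = s := by
    rw [dist_eq_norm, add_sub_cancel_left, norm_smul, hw, Real.norm_eq_abs, abs_of_pos hs, mul_one]
  have hu'q : dist (u + s • w) q = dist u q - s := by
    have : u + s • w - q = (1 - s / ‖q - u‖) • (u - q) := by
      simp only [w, smul_smul, div_eq_mul_inv]; module
    rw [dist_eq_norm, this, norm_smul, Real.norm_eq_abs, abs_of_nonneg, norm_sub_rev u q,
      dist_eq_norm, norm_sub_rev u q]
    · field_simp
    · rw [sub_nonneg, div_le_one hn₀]; exact hsd.trans hn
  have hd' : d - s ≤ infDist (u + s • w) S := by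
    linarith [infDist_le_infDist_add_dist (x := u) (y := u + s • w) (s := S),
      dist_comm u (u + s • w)]
  have lens : ∀ z ∈ S, dist (u + s • w) z ≤ infDist (u + s • w) S + s * θ ^ 2 →
      dist z (u + d • w) ≤ 2 * d * θ := fun z hz hzd =>
    dist_le_of_dist_add_smul_le hw hs hsd hθ₀ hθ₁
      (by rw [dist_comm]; exact infDist_le_dist_of_mem hz)
      (hzd.trans (by linarith [infDist_le_dist_of_mem (x := u + s • w) hq]))
  refine ⟨u + s • w, hu'u, fun z hz hzd => ?_⟩
  calc dist z q ≤ dist z (u + d • w) + dist q (u + d • w) := dist_triangle_right _ _ _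
    _ ≤ 2 * d * θ + 2 * d * θ := add_le_add (lens z hz hzd) (lens q hq (by linarith))
    _ = 4 * d * θ := by ring

/-- Centres `u n` moving by `e / 2 ^ (n + 1)` towards almost-nearest points `q n` whose
tolerance `δ n` is so small that, by `exists_dist_eq_forall_dist_le`, consecutive `q n` are
geometrically close. -/
lemma exists_seq_dist_le_infDist_add (hne : S.Nonempty) {u : H} {e : ℝ} (he : 0 < e)
    (hu : 2 * e ≤ infDist u S) :
    ∃ x : ℕ → H × H, ∀ n, (x n).2 ∈ S ∧ dist (x n).1 (x n).2 ≤ infDist (x n).1 S + e * (1 / 2) ^ n ∧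
      dist (x n).1 u ≤ e ∧ dist (x n).1 (x (n + 1)).1 ≤ e / 2 * (1 / 2) ^ n ∧
      dist (x n).2 (x (n + 1)).2 ≤ 4 * (infDist u S + e) * (1 / 2) ^ n := by
  set s : ℕ → ℝ := fun k => e * (1 / 2) ^ (k + 1)
  set θ : ℕ → ℝ := fun k => (1 / 2) ^ k
  set δ : ℕ → ℝ := fun k => s k * θ k ^ 2
  have hs : ∀ k, 0 < s k := fun k => by positivity
  have hθ₁ : ∀ k, θ k ≤ 1 := fun k => pow_le_one₀ (by norm_num) (by norm_num)
  have hs_succ : ∀ k, s (k + 1) = s k / 2 := fun k => by simp only [s]; ring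
  have hδ_succ : ∀ k, δ (k + 1) ≤ δ k := fun k => by
    have : δ (k + 1) = δ k / 8 := by simp only [δ, s, θ]; ring
    have : 0 < δ k := by positivity
    linarith
  have hδ_le : ∀ k, δ k ≤ e * (1 / 2) ^ k := fun k => by
    calc δ k ≤ s k := mul_le_of_le_one_right (hs k).le (pow_le_one₀ (by positivity) (hθ₁ k))
      _ ≤ e * (1 / 2) ^ k := by
        simp only [s, pow_succ]; nlinarith [pow_pos (by norm_num : (0 : ℝ) < 1 / 2) k]
  set P : ℕ → H × H → Prop := fun k p =>
    p.2 ∈ S ∧ dist p.1 p.2 ≤ infDist p.1 S + δ k ∧ dist p.1 u ≤ e - 2 * s k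
  have start : ∃ p, P 0 p := by
    obtain ⟨q, hq, hqu⟩ := (infDist_lt_iff hne).1 (lt_add_of_pos_right (infDist u S) (by
      positivity : 0 < δ 0))
    exact ⟨(u, q), hq, hqu.le, by norm_num [s]; linarith⟩
  have step : ∀ k p, P k p → ∃ p', P (k + 1) p' ∧ dist p.1 p'.1 ≤ e / 2 * (1 / 2) ^ k ∧
      dist p.2 p'.2 ≤ 4 * (infDist u S + e) * (1 / 2) ^ k := by
    rintro k ⟨v, q⟩ ⟨hq, hqv, hvu⟩
    dsimp only at hq hqv hvu ⊢
    have hdv := infDist_le_infDist_add_dist (x := u) (y := v) (s := S)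
    have hvd := infDist_le_infDist_add_dist (x := v) (y := u) (s := S)
    obtain ⟨v', hv'v, hlens⟩ := exists_dist_eq_forall_dist_le hq hqv (hs k)
      (by rw [dist_comm] at hdv; linarith [hs k]) (by positivity) (hθ₁ k)
    obtain ⟨q', hq', hq'v'⟩ := (infDist_lt_iff hne).1 (lt_add_of_pos_right (infDist v' S) (by
      positivity : 0 < δ (k + 1)))
    refine ⟨(v', q'), ⟨hq', hq'v'.le, ?_⟩, ?_, ?_⟩
    · linarith [dist_triangle v' v u, hs_succ k]
    · rw [dist_comm, hv'v]; simp only [s, pow_succ]; linarith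
    · rw [dist_comm]
      refine (hlens q' hq' (hq'v'.le.trans (by linarith [hδ_succ k]))).trans ?_
      have : 0 ≤ θ k := by positivity
      gcongr
      linarith [hs k]
  obtain ⟨x, hx⟩ := exists_seq_of_forall_exists_succ start step
  exact ⟨x, fun n => ⟨(hx n).1.1, (hx n).1.2.1.trans (by gcongr; exact hδ_le n),
    (hx n).1.2.2.trans (by linarith [hs n]), (hx n).2⟩⟩

lemma exists_dist_le_isMinOn_dist [CompleteSpace H] (hS : IsClosed S) (hne : S.Nonempty)
    (u : H) {ε : ℝ} (hε : 0 < ε) : ∃ v, dist v u ≤ ε ∧ ∃ p ∈ S, IsMinOn (dist v) S p := by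
  by_cases hu : infDist u S < ε
  · obtain ⟨p, hp, hpu⟩ := (infDist_lt_iff hne).1 hu
    exact ⟨p, by rw [dist_comm]; exact hpu.le, p, hp, fun y _ => by simp⟩
  obtain ⟨e, he, rfl⟩ : ∃ e, 0 < e ∧ ε = 2 * e := ⟨ε / 2, by positivity, by ring⟩
  obtain ⟨x, hx⟩ := exists_seq_dist_le_infDist_add hne he (not_lt.1 hu)
  obtain ⟨v, hv⟩ := cauchySeq_tendsto_of_complete <|
    cauchySeq_of_le_geometric (1 / 2) (e / 2) (by norm_num) fun n => (hx n).2.2.2.1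
  obtain ⟨p, hp⟩ := cauchySeq_tendsto_of_complete <|
    cauchySeq_of_le_geometric (1 / 2) _ (by norm_num) fun n => (hx n).2.2.2.2
  have hδ : Tendsto (fun n : ℕ => e * (1 / 2) ^ n) atTop (𝓝 0) := by
    simpa using (tendsto_pow_atTop_nhds_zero_of_lt_one (by norm_num : (0 : ℝ) ≤ 1 / 2)
      (by norm_num)).const_mul e
  refine ⟨v, ?_, p, hS.isMinOn_dist_of_tendsto hv hp hδ (fun n => (hx n).1) fun n => (hx n).2.1⟩
  exact le_of_tendsto (hv.dist tendsto_const_nhds) (Eventually.of_forall fun n => by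
    linarith [(hx n).2.2.1])

end NearestPoints

section ProxRegular

variable {H : Type*} [NormedAddCommGroup H] [InnerProductSpace ℝ H] {S : Set H}

lemma uniformlyProxRegular_singleton (ρ : ℝ≥0∞) (x : H) : UniformlyProxRegular ρ {x} := by
  rintro a rfl ζ - b rfl
  simp

lemma sub_mem_proxNormalCone_of_isMinOn {v p : H} (hp : IsMinOn (dist v) S p) :
    v - p ∈ ProxNormalCone S p := by
  refine ⟨1 / 2, by norm_num, 1, one_pos, fun y hy _ => ?_⟩
  have hvy : ‖v - p‖ ^ 2 ≤ ‖(v - p) - (y - p)‖ ^ 2 := by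
    rw [sub_sub_sub_cancel_right, ← dist_eq_norm, ← dist_eq_norm]
    exact pow_le_pow_left₀ dist_nonneg (hp hy) 2
  rw [norm_sub_sq_real (v - p) (y - p)] at hvy
  linarith

lemma convex_setOf_inner_sub_le (ζ p : H) (K : ℝ) : Convex ℝ {c : H | ⟪ζ, c - p⟫ ≤ K} := by
  simp_rw [inner_sub_right, sub_le_iff_le_add]
  exact convex_halfSpace_le (innerₛₗ ℝ ζ).isLinear _

lemma UniformlyProxRegular.inner_sub_le_of_dist_lt {ρ : ℝ≥0∞} (hprox : UniformlyProxRegular ρ S)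
    {p ζ w c : H} {ε M : ℝ} (hp : p ∈ S) (hζ : ζ ∈ ProxNormalCone S p) (hw : w ∈ S)
    (hcw : dist c w < ε) (hwp : ‖w - p‖ ≤ M) :
    ⟪ζ, c - p⟫ ≤ ‖ζ‖ * (M ^ 2 / (2 * ρ.toReal) + ε) := by
  calc ⟪ζ, c - p⟫ = ⟪ζ, w - p⟫ + ⟪ζ, c - w⟫ := by rw [← inner_add_right, sub_add_sub_cancel']
    _ ≤ ‖ζ‖ / (2 * ρ.toReal) * M ^ 2 + ‖ζ‖ * ε := by
      gcongr
      · exact (hprox p hp ζ hζ w hw).trans (by gcongr)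
      · exact (real_inner_le_norm _ _).trans (by gcongr; rw [← dist_eq_norm]; exact hcw.le)
    _ = ‖ζ‖ * (M ^ 2 / (2 * ρ.toReal) + ε) := by ring

variable [CompleteSpace H] {ρ : ℝ≥0∞} {s : Set H} {a x : H} {R ε : ℝ}

/-- Test `x` against the proximal normal `v - p`, where `p` is a nearest point of some `v` close
to `x`: prox-regularity bounds `⟪v - p, c - p⟫` on `s`, hence at `x`, which forces `‖v - p‖`
to be small. -/
lemma infDist_le_of_mem_convexHull_of_pos (hS : IsClosed S) (hprox : UniformlyProxRegular ρ S)
    (hsS : s ⊆ thickening ε S) (hsa : s ⊆ closedBall a R) (hx : x ∈ convexHull ℝ s)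
    {τ : ℝ} (hτ : 0 < τ) :
    infDist x S ≤ 2 * τ + ε + (4 * R + 2 * ε + 2 * τ) ^ 2 / (2 * ρ.toReal) := by
  obtain ⟨c₀, hc₀⟩ := convexHull_nonempty_iff.1 ⟨x, hx⟩
  obtain ⟨w₀, hw₀, hcw₀⟩ := mem_thickening_iff.1 (hsS hc₀)
  obtain ⟨v, hvx, p, hp, hmin⟩ := exists_dist_le_isMinOn_dist hS ⟨w₀, hw₀⟩ x hτ
  set M := 4 * R + 2 * ε + 2 * τ
  set K := M ^ 2 / (2 * ρ.toReal) + ε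
  have hxa : dist x a ≤ R := (convex_closedBall a R).convexHull_subset_iff.2 hsa hx
  have hwx : ∀ c ∈ s, ∀ w, dist c w < ε → dist w x ≤ 2 * R + ε := fun c hc w hcw => by
    linarith [dist_triangle4 w c a x, mem_closedBall.1 (hsa hc), dist_comm w c, dist_comm a x]
  have hvp : dist v p ≤ τ + 2 * R + ε := by
    linarith [isMinOn_iff.1 hmin w₀ hw₀, dist_triangle v x w₀, dist_comm x w₀, hwx c₀ hc₀ w₀ hcw₀]
  have hs_half : s ⊆ {c | ⟪v - p, c - p⟫ ≤ ‖v - p‖ * K} := fun c hc => by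
    obtain ⟨w, hw, hcw⟩ := mem_thickening_iff.1 (hsS hc)
    refine hprox.inner_sub_le_of_dist_lt hp (sub_mem_proxNormalCone_of_isMinOn hmin) hw hcw ?_
    rw [← dist_eq_norm]
    linarith [dist_triangle4 w x v p, hwx c hc w hcw, dist_comm x v]
  have hx_half := (convex_setOf_inner_sub_le _ _ _).convexHull_subset_iff.2 hs_half hx
  have hx_lower : ‖v - p‖ ^ 2 - ‖v - p‖ * τ ≤ ⟪v - p, x - p⟫ := by
    have : ⟪v - p, x - p⟫ = ‖v - p‖ ^ 2 - ⟪v - p, v - x⟫ := by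
      rw [← real_inner_self_eq_norm_sq, ← inner_sub_right, sub_sub_sub_cancel_left]
    rw [this]
    gcongr
    exact (real_inner_le_norm _ _).trans (by gcongr; rw [← dist_eq_norm]; exact hvx)
  have hK : 0 ≤ K := add_nonneg (by positivity) (dist_nonneg.trans hcw₀.le)
  have hvp' : dist v p ≤ τ + K := by
    rw [dist_eq_norm]
    nlinarith [norm_nonneg (v - p), hx_half.trans' hx_lower]
  calc infDist x S ≤ dist x p := infDist_le_dist_of_mem hp
    _ ≤ dist x v + dist v p := dist_triangle _ _ _
    _ ≤ 2 * τ + ε + M ^ 2 / (2 * ρ.toReal) := by linarith [dist_comm x v]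

lemma infDist_le_of_mem_convexHull (hS : IsClosed S) (hprox : UniformlyProxRegular ρ S)
    (hsS : s ⊆ thickening ε S) (hsa : s ⊆ closedBall a R) (hx : x ∈ convexHull ℝ s) :
    infDist x S ≤ ε + (4 * R + 2 * ε) ^ 2 / (2 * ρ.toReal) := by
  have hlim : Tendsto (fun τ : ℝ => 2 * τ + ε + (4 * R + 2 * ε + 2 * τ) ^ 2 / (2 * ρ.toReal))
      (𝓝[>] 0) (𝓝 (ε + (4 * R + 2 * ε) ^ 2 / (2 * ρ.toReal))) := by
    refine tendsto_nhdsWithin_of_tendsto_nhds ?_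
    convert ((by fun_prop : Continuous fun τ : ℝ =>
      2 * τ + ε + (4 * R + 2 * ε + 2 * τ) ^ 2 / (2 * ρ.toReal)).tendsto 0) using 2
    simp
  exact ge_of_tendsto hlim (eventually_nhdsWithin_of_forall fun τ hτ =>
    infDist_le_of_mem_convexHull_of_pos hS hprox hsS hsa hx hτ)

end ProxRegular

section Glue

variable {H : Type*} [NormedAddCommGroup H] [NormedSpace ℝ H]

noncomputable def glueTo (f : ℝ → H) (a b : ℝ) (y : H) : ℝ → H :=
  fun t => f (min t a) + ((min (max t a) b - a) / (b - a)) • (y - f a)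

variable {f : ℝ → H} {a b t : ℝ} {y : H}

lemma Continuous.glueTo (hf : Continuous f) : Continuous (glueTo f a b y) := by
  unfold _root_.glueTo; fun_prop

lemma glueTo_of_le (hab : a ≤ b) (ht : t ≤ a) : glueTo f a b y t = f t := by
  simp [glueTo, ht, hab]

lemma glueTo_of_ge (hab : a < b) (ht : b ≤ t) : glueTo f a b y t = y := by
  simp [glueTo, hab.le.trans ht, ht, div_self (sub_ne_zero.2 hab.ne')]

lemma glueTo_mem_segment (hab : a < b) (ht : a ≤ t) : glueTo f a b y t ∈ segment ℝ (f a) y := by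
  rw [segment_eq_image']
  refine ⟨(min (max t a) b - a) / (b - a), ⟨?_, ?_⟩, by simp [glueTo, ht]⟩
  · exact div_nonneg (by simp [ht, hab.le]) (sub_nonneg.2 hab.le)
  · exact div_le_one_of_le₀ (by simp) (sub_nonneg.2 hab.le)

end Glue

section Steering

variable {E : Type*} [PseudoMetricSpace E] (D : ℝ → Set E) (T δ : ℝ)

/-- `y` is reachable from `x` at time `b`: shortly after `b`, any `δ`-approximate selection on
`[0, a]` ending near `x` continues to one that eventually equals `y`. -/
def CanSteer (b : ℝ) (x y : E) : Prop :=
  ∃ h > 0, ∀ a β, b ≤ a → a < β → β ≤ T → β ≤ b + h → ∀ f : ℝ → E, Continuous f →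
    (∀ t ∈ Icc 0 a, infDist (f t) (D t) < δ) → dist (f a) x < δ / 2 →
    ∃ b' ∈ Ioc a β, ∃ f' : ℝ → E, Continuous f' ∧ (∀ t ∈ Icc 0 b', infDist (f' t) (D t) < δ) ∧
      ∀ t, b' ≤ t → f' t = y

variable {D T δ}

lemma CanSteer.trans {b : ℝ} {x y z : E} (hδ : 0 < δ) (hxy : CanSteer D T δ b x y)
    (hyz : CanSteer D T δ b y z) : CanSteer D T δ b x z := by
  obtain ⟨h₁, hh₁, hxy⟩ := hxy
  obtain ⟨h₂, hh₂, hyz⟩ := hyz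
  refine ⟨min h₁ h₂, lt_min hh₁ hh₂, fun a β hba haβ hβT hβh f hf hfD hfa => ?_⟩
  obtain ⟨b₁, ⟨hab₁, hb₁⟩, f₁, hf₁, hf₁D, hf₁y⟩ := hxy a ((a + β) / 2) hba (by linarith)
    (by linarith) (by linarith [min_le_left h₁ h₂]) f hf hfD hfa
  obtain ⟨b', ⟨hb₁b', hb'⟩, f', hf', hf'D, hf'z⟩ := hyz b₁ β (by linarith) (by linarith) hβT
    (by linarith [min_le_right h₁ h₂]) f₁ hf₁ hf₁D (by rw [hf₁y b₁ le_rfl, dist_self]; positivity)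
  exact ⟨b', ⟨hab₁.trans hb₁b', hb'⟩, f', hf', hf'D, hf'z⟩

end Steering

section ApproxSelection

variable {H : Type*} [NormedAddCommGroup H] [NormedSpace ℝ H] {D : ℝ → Set H} {T δ : ℝ}

lemma canSteer_of_dist_lt {b h : ℝ} {c x y : H} (hh : 0 < h)
    (hwin : ball b h ∩ Icc 0 T ⊆ {t | infDist c (D t) < δ / 4})
    (hx : dist x c < δ / 4) (hy : dist y c < δ / 4) : CanSteer D T δ b x y := by
  refine ⟨h / 2, half_pos hh, fun a β hba haβ hβT hβh f hf hfD hfa => ⟨β, ⟨haβ, le_rfl⟩,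
    glueTo f a β y, hf.glueTo, fun t ht => ?_, fun t ht => glueTo_of_ge haβ ht⟩⟩
  rcases le_or_gt t a with hta | hat
  · rw [glueTo_of_le haβ.le hta]
    exact hfD t ⟨ht.1, hta⟩
  have hseg : glueTo f a β y t ∈ ball c (3 * δ / 4) :=
    (convex_ball c _).segment_subset (mem_ball.2 (by linarith [dist_triangle (f a) x c]))
      (mem_ball.2 (by linarith [dist_nonneg (x := y) (y := c)])) (glueTo_mem_segment haβ hat.le)
  have hct : infDist c (D t) < δ / 4 := hwin ⟨by
    rw [mem_ball, Real.dist_eq, abs_lt]; constructor <;> linarith [ht.2], ht.1, by linarith [ht.2]⟩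
  linarith [infDist_le_infDist_add_dist (x := glueTo f a β y t) (y := c) (s := D t),
    mem_ball.1 hseg]

lemma IsPreconnected.canSteer {b : ℝ} (hδ : 0 < δ) (hb : b ∈ Icc 0 T)
    (hconn : IsPreconnected (D b)) (hD : LscOn D (Icc 0 T)) {x y : H} (hx : x ∈ D b)
    (hy : y ∈ D b) : CanSteer D T δ b x y := by
  refine hconn.induction₂' _ (fun c hc => ?_) (fun _ _ _ _ _ _ => CanSteer.trans hδ) hx hy
  obtain ⟨h, hh, hwin⟩ := Metric.mem_nhdsWithin_iff.1
    (hD.eventually_infDist_lt hb hc (by positivity : 0 < δ / 4))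
  filter_upwards [mem_nhdsWithin_of_mem_nhds (ball_mem_nhds c (by positivity : 0 < δ / 4))]
    with y hy
  have hc' : dist c c < δ / 4 := by rw [dist_self]; positivity
  exact ⟨canSteer_of_dist_lt hh hwin hc' hy, canSteer_of_dist_lt hh hwin hy hc'⟩

lemma exists_continuous_forall_infDist_lt_of_near (hδ : 0 < δ)
    (hne : ∀ t ∈ Icc 0 T, (D t).Nonempty) (hconn : ∀ t ∈ Icc 0 T, IsPreconnected (D t))
    (hD : LscOn D (Icc 0 T)) {b γ : ℝ} {c₀ : H} (hb : b ∈ Icc 0 T) (hbγ : b < γ) (hγT : γ ≤ T)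
    (hc₀ : ∀ t ∈ Icc b γ, infDist c₀ (D t) < δ / 4) {f : ℝ → H} (hf : Continuous f)
    (hfD : ∀ t ∈ Icc 0 b, infDist (f t) (D t) < δ) (hfb : infDist (f b) (D b) < δ / 2) :
    ∃ f' : ℝ → H, Continuous f' ∧ (∀ t ∈ Icc 0 γ, infDist (f' t) (D t) < δ) ∧
      infDist (f' γ) (D γ) < δ / 2 := by
  obtain ⟨c, hc, hfc⟩ := (infDist_lt_iff (hne b hb)).1 hfb
  obtain ⟨e, he, hc₀e⟩ := (infDist_lt_iff (hne b hb)).1 (hc₀ b ⟨le_rfl, hbγ.le⟩)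
  obtain ⟨h, hh, hsteer⟩ := (hconn b hb).canSteer hδ hb hD hc he
  obtain ⟨b', ⟨hbb', hb'β⟩, f', hf', hf'D, hf'e⟩ := hsteer b (min γ (b + h)) le_rfl
    (lt_min hbγ (by linarith)) ((min_le_left _ _).trans hγT) (min_le_right _ _) f hf hfD hfc
  have hb'γ : b' ≤ γ := hb'β.trans (min_le_left _ _)
  have hnear : ∀ t ∈ Icc b' γ, infDist (f' t) (D t) < δ / 2 := fun t ht => by
    rw [hf'e t ht.1]
    linarith [infDist_le_infDist_add_dist (x := e) (y := c₀) (s := D t), dist_comm e c₀,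
      hc₀ t ⟨hbb'.le.trans ht.1, ht.2⟩]
  refine ⟨f', hf', fun t ht => ?_, hnear γ ⟨hb'γ, le_rfl⟩⟩
  rcases le_or_gt t b' with htb | htb
  · exact hf'D t ⟨ht.1, htb⟩
  · exact (hnear t ⟨htb.le, ht.2⟩).trans (half_lt_self hδ)

/-- Let `b₀` be the supremum of the times up to which an approximate selection exists. Near `b₀`
some point stays close to `D t`, so an approximate selection up to a time just before `b₀`
extends beyond `b₀` unless `b₀ = T`. -/
lemma exists_continuous_forall_infDist_lt (hT : 0 ≤ T) (hne : ∀ t ∈ Icc 0 T, (D t).Nonempty)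
    (hconn : ∀ t ∈ Icc 0 T, IsPreconnected (D t)) (hD : LscOn D (Icc 0 T)) (hδ : 0 < δ) :
    ∃ f : ℝ → H, Continuous f ∧ ∀ t ∈ Icc 0 T, infDist (f t) (D t) < δ := by
  set A := {b ∈ Icc 0 T | ∃ f : ℝ → H, Continuous f ∧
    (∀ t ∈ Icc 0 b, infDist (f t) (D t) < δ) ∧ infDist (f b) (D b) < δ / 2}
  have h0A : 0 ∈ A := by
    obtain ⟨c, hc⟩ := hne 0 ⟨le_rfl, hT⟩
    have hc0 : infDist c (D 0) = 0 := infDist_zero_of_mem hc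
    refine ⟨⟨le_rfl, hT⟩, fun _ => c, continuous_const, fun t ht => ?_, by rw [hc0]; positivity⟩
    rw [le_antisymm ht.2 ht.1, hc0]
    exact hδ
  have hAbdd : BddAbove A := ⟨T, fun b hb => hb.1.2⟩
  set b₀ := sSup A
  have hb₀ : b₀ ∈ Icc 0 T := ⟨le_csSup hAbdd h0A, csSup_le ⟨0, h0A⟩ fun b hb => hb.1.2⟩
  obtain ⟨c₀, hc₀⟩ := hne b₀ hb₀
  obtain ⟨h, hh, hwin⟩ := Metric.mem_nhdsWithin_iff.1
    (hD.eventually_infDist_lt hb₀ hc₀ (by positivity : 0 < δ / 4))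
  obtain ⟨b, ⟨hbI, f, hf, hfD, hfb⟩, hb⟩ := exists_lt_of_lt_csSup ⟨0, h0A⟩ (sub_lt_self b₀ hh)
  have hbb₀ : b ≤ b₀ := le_csSup hAbdd ⟨hbI, f, hf, hfD, hfb⟩
  rcases hbI.2.eq_or_lt with rfl | hbT
  · exact ⟨f, hf, hfD⟩
  set γ := min T (b₀ + h / 2)
  have hγ : γ ≤ b₀ + h / 2 := min_le_right _ _
  have hbγ : b < γ := lt_min hbT (by linarith)
  obtain ⟨f', hf', hf'D, hf'γ⟩ := exists_continuous_forall_infDist_lt_of_near hδ hne hconn hD hbI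
    hbγ (min_le_left _ _) (fun t ht => hwin ⟨by
      rw [mem_ball, Real.dist_eq, abs_lt]; constructor <;> linarith [ht.1, ht.2],
      by linarith [hbI.1, ht.1], ht.2.trans (min_le_left _ _)⟩) hf hfD hfb
  have hγT : γ = T := by
    have : γ ≤ b₀ := le_csSup hAbdd ⟨⟨by linarith [hbI.1], min_le_left _ _⟩, f', hf', hf'D, hf'γ⟩
    rcases min_choice T (b₀ + h / 2) with hγT | hγT
    · exact hγT
    · linarith
  exact ⟨f', hf', hγT ▸ hf'D⟩

end ApproxSelection

section Selection

variable {H : Type*} [NormedAddCommGroup H] [InnerProductSpace ℝ H] [CompleteSpace H]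
  {ρ : ℝ≥0∞} {D : ℝ → Set H} {T : ℝ}

/-- A partition of unity glues local points of `D` into a map whose values are convex
combinations of nearby points of `D t`; prox-regularity keeps these close to `D t`. -/
lemma exists_continuous_forall_infDist_lt_half (hne : ∀ t ∈ Icc 0 T, (D t).Nonempty)
    (hcl : ∀ t ∈ Icc 0 T, IsClosed (D t)) (hprox : ∀ t ∈ Icc 0 T, UniformlyProxRegular ρ (D t))
    (hD : LscOn D (Icc 0 T)) {f : ℝ → H} (hf : Continuous f) {δ : ℝ} (hδ : 0 < δ)
    (hδρ : δ / (2 * ρ.toReal) ≤ 1 / 64) (hfD : ∀ t ∈ Icc 0 T, infDist (f t) (D t) < δ) :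
    ∃ g : ℝ → H, Continuous g ∧
      ∀ t ∈ Icc 0 T, infDist (g t) (D t) < δ / 2 ∧ dist (g t) (f t) ≤ δ := by
  set K : ℝ → Set H := fun t => thickening (δ / 8) (D t) ∩ ball (f t) δ
  have hloc : ∀ x, ∃ c, ∀ᶠ y in 𝓝 x, y ∈ Icc 0 T → c ∈ convexHull ℝ (K y) := by
    intro x
    by_cases hx : x ∈ Icc 0 T
    · obtain ⟨w, hw, hfw⟩ := (infDist_lt_iff (hne x hx)).1 (hfD x hx)
      refine ⟨w, ?_⟩
      filter_upwards [eventually_nhdsWithin_iff.1 (hD.eventually_infDist_lt hx hw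
        (by positivity : 0 < δ / 8)), (hf.tendsto x).eventually (isOpen_ball.mem_nhds
        (mem_ball.2 hfw))] with y hwy hfy hy
      exact subset_convexHull ℝ _
        ⟨(mem_thickening_iff_infDist_lt (hne y hy)).2 (hwy hy), mem_ball_comm.1 hfy⟩
    · refine ⟨0, ?_⟩
      filter_upwards [isClosed_Icc.isOpen_compl.mem_nhds hx] with y hy hy'
      exact absurd hy' hy
  obtain ⟨g, hg⟩ := exists_continuous_forall_mem_convex_of_local_const
    (t := fun t => {v | t ∈ Icc 0 T → v ∈ convexHull ℝ (K t)}) (fun t => by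
      by_cases ht : t ∈ Icc 0 T
      · simpa [ht] using convex_convexHull ℝ (K t)
      · simpa [ht] using convex_univ) hloc
  refine ⟨g, g.continuous, fun t ht => ?_⟩
  have hK : K t ⊆ closedBall (f t) δ := inter_subset_right.trans ball_subset_closedBall
  refine ⟨?_, (convex_closedBall _ _).convexHull_subset_iff.2 hK (hg t ht)⟩
  have hbound := infDist_le_of_mem_convexHull (hcl t ht) (hprox t ht) inter_subset_left hK
    (hg t ht)
  have : (4 * δ + 2 * (δ / 8)) ^ 2 / (2 * ρ.toReal) = 289 / 16 * δ * (δ / (2 * ρ.toReal)) := by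
    ring
  nlinarith

lemma exists_continuousOn_forall_mem (hT : 0 ≤ T) (hne : ∀ t ∈ Icc 0 T, (D t).Nonempty)
    (hcl : ∀ t ∈ Icc 0 T, IsClosed (D t)) (hconn : ∀ t ∈ Icc 0 T, IsPreconnected (D t))
    (hprox : ∀ t ∈ Icc 0 T, UniformlyProxRegular ρ (D t)) (hD : LscOn D (Icc 0 T)) :
    ∃ g : ℝ → H, ContinuousOn g (Icc 0 T) ∧ ∀ t ∈ Icc 0 T, g t ∈ D t := by
  obtain ⟨δ₀, hδ₀, hδ₀ρ⟩ : ∃ δ₀ > 0, δ₀ / (2 * ρ.toReal) ≤ 1 / 64 := by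
    refine ⟨1 / (64 * ((2 * ρ.toReal)⁻¹ + 1)), by positivity, ?_⟩
    have : 0 ≤ (2 * ρ.toReal)⁻¹ := by positivity
    rw [div_eq_mul_inv, div_mul_eq_mul_div, one_mul, div_le_div_iff₀ (by positivity) (by norm_num)]
    nlinarith
  set δ : ℕ → ℝ := fun n => δ₀ / 2 ^ n
  have hδ : ∀ n, 0 < δ n := fun n => by positivity
  have hδρ : ∀ n, δ n / (2 * ρ.toReal) ≤ 1 / 64 := fun n =>
    (div_le_div_of_nonneg_right (div_le_self hδ₀.le (one_le_pow₀ one_le_two))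
      (by positivity)).trans hδ₀ρ
  obtain ⟨F, hF⟩ := exists_seq_of_forall_exists_succ
    (P := fun n (f : ℝ → H) => Continuous f ∧ ∀ t ∈ Icc 0 T, infDist (f t) (D t) < δ n)
    (R := fun n f f' => ∀ t ∈ Icc 0 T, dist (f t) (f' t) ≤ 2 * δ₀ / 2 / 2 ^ n)
    (exists_continuous_forall_infDist_lt hT hne hconn hD (hδ 0)) fun n f ⟨hf, hfD⟩ => by
      obtain ⟨g, hg, hgD⟩ := exists_continuous_forall_infDist_lt_half hne hcl hprox hD hf (hδ n)
        (hδρ n) hfD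
      refine ⟨g, ⟨hg, fun t ht => ?_⟩, fun t ht => ?_⟩
      · simpa [δ, pow_succ, div_div] using (hgD t ht).1
      · simpa [δ, dist_comm] using (hgD t ht).2
  obtain ⟨g, hg⟩ := exists_tendstoUniformlyOn_of_dist_le_geometric_two fun n => (hF n).2
  refine ⟨g, hg.continuousOn (Frequently.of_forall fun n => (hF n).1.1.continuousOn),
    fun t ht => ?_⟩
  have hδ0 : Tendsto δ atTop (𝓝 0) :=
    tendsto_const_nhds.div_atTop (tendsto_pow_atTop_atTop_of_one_lt one_lt_two)
  have hgt : infDist (g t) (D t) ≤ 0 :=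
    le_of_tendsto_of_tendsto' ((continuous_infDist_pt _).tendsto _ |>.comp (hg.tendsto_at ht))
      hδ0 fun n => ((hF n).1.2 t ht).le
  rw [← (hcl t ht).closure_eq, mem_closure_iff_infDist_zero (hne t ht)]
  exact le_antisymm hgt infDist_nonneg

end Selection

theorem selectionExtension_of_bounded_proxRegular_general
    {H : Type*} [NormedAddCommGroup H] [InnerProductSpace ℝ H] [CompleteSpace H]
    (T : ℝ) (hT : 0 < T) (ρ : ℝ≥0∞) (C : ℝ → Set H)
    (hC1 : HypH1 ρ C T) (hC2 : LscOn C (Icc (0:ℝ) T))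
    (r : ℝ) (hr : 0 < r) (hbd : ∀ t ∈ Icc (0:ℝ) T, C t ⊆ closedBall (0:H) r) :
    SelectionExtension C T := by
  classical
  intro _ _ _ _ _
  refine ⟨r, hr, fun K hK hKI y hy hyC _ => ?_⟩
  set D := K.piecewise (fun t => {y t}) C
  have hD : ∀ t ∈ Icc 0 T, (D t).Nonempty ∧ IsClosed (D t) ∧ IsPreconnected (D t) ∧
      UniformlyProxRegular ρ (D t) ∧ D t ⊆ C t := by
    intro t ht
    by_cases htK : t ∈ K
    · rw [show D t = {y t} from piecewise_eq_of_mem _ _ _ htK]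
      exact ⟨singleton_nonempty _, isClosed_singleton, isPreconnected_singleton,
        uniformlyProxRegular_singleton ρ _, singleton_subset_iff.2 (hyC t htK)⟩
    · obtain ⟨hne, hcl, hconn, hprox⟩ := hC1 t ht
      rw [show D t = C t from piecewise_eq_of_notMem _ _ _ htK]
      exact ⟨hne, hcl, hconn.isPreconnected, hprox, subset_rfl⟩
  obtain ⟨g, hg, hgD⟩ := exists_continuousOn_forall_mem hT.le (fun t ht => (hD t ht).1)
    (fun t ht => (hD t ht).2.1) (fun t ht => (hD t ht).2.2.1) (fun t ht => (hD t ht).2.2.2.1)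
    (hC2.piecewise_singleton hK.isClosed hy hyC)
  have hgC : ∀ t ∈ Icc 0 T, g t ∈ C t := fun t ht => (hD t ht).2.2.2.2 (hgD t ht)
  refine ⟨g, hg, hgC, fun t ht => ?_, fun t ht => by simpa using hbd t ht (hgC t ht)⟩
  simpa [D, piecewise_eq_of_mem _ _ _ ht] using hgD t (hKI ht)

/-- Under (H₁), (H₂) and uniform boundedness of the values, the moving set
satisfies the bounded selection-extension property (H₃). -/
theorem selectionExtension_of_bounded_proxRegular
    {H : Type*} [NormedAddCommGroup H] [InnerProductSpace ℝ H] [CompleteSpace H]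
    (T : ℝ) (hT : 0 < T) (ρ : ℝ≥0∞) (hρ : 0 < ρ) (C : ℝ → Set H)
    (hC1 : HypH1 ρ C T) (hC2 : LscOn C (Icc (0:ℝ) T))
    (r : ℝ) (hr : 0 < r) (hbd : ∀ t ∈ Icc (0:ℝ) T, C t ⊆ closedBall (0:H) r) :
    SelectionExtension C T :=
  selectionExtension_of_bounded_proxRegular_general T hT ρ C hC1 hC2 r hr hbd
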